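/- arXiv:1309.5640 — 3 statements merged into one kernel-verified Lean document; each statement's English description precedes it below -/
import Mathlib

section
/- Let A = M_n(ℂ), let ψ be a state on A, let q ∈ A be a projection with q ≠ 0, and let C be a context with C ≠ ℂ·1. Then the following are equivalent: (1) for every context D with ℂ·1 ⊊ D ⊆ C, the greatest element e of {p ∈ Proj(D) : p ≤ 1 − q} in the Löwner order (the inner daseinisation δⁱ(1−q)_D) satisfies ψ(e) = 1; (2) there exists a projection p ∈ C such that C equals the unital *-subalgebra of A generated by p, q ≤ p, and ψ(p) = 0. -/
open scoped ComplexOrder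

noncomputable section

/-- `M_n(ℂ)`, the C*-algebra of `n × n` complex matrices. -/
abbrev Mat (n : ℕ) := Matrix (Fin n) (Fin n) ℂ

/-- The spectral projection `χ_S(a)` of a Hermitian matrix `a`, obtained by applying the
indicator function of `S` via the functional calculus from the spectral decomposition. -/
def specProj {n : ℕ} (a : Mat n) (S : Set ℝ) : Mat n :=
  if h : a.IsHermitian then h.cfc (Set.indicator S fun _ => (1 : ℝ)) else 0

/-- The Löwner order: `x ≤ y` iff `y - x` is positive semidefinite. -/
def loewnerLE {n : ℕ} (x y : Mat n) : Prop := (y - x).PosSemidef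

/-- The spectral order on (Hermitian) matrices:
`a ≤ₛ b` iff `χ_{(-∞,x]}(b) ≤ χ_{(-∞,x]}(a)` in the Löwner order for every `x : ℝ`. -/
def specLE {n : ℕ} (a b : Mat n) : Prop :=
  ∀ x : ℝ, loewnerLE (specProj b (Set.Iic x)) (specProj a (Set.Iic x))

/-- A projection: `p = p* = p²`. -/
def IsProjection {n : ℕ} (p : Mat n) : Prop := star p = p ∧ p * p = p

/-- A context: a commutative unital *-subalgebra of `M_n(ℂ)`. -/
structure Ctx (n : ℕ) where
  alg : StarSubalgebra ℂ (Mat n)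
  comm : ∀ x ∈ alg, ∀ y ∈ alg, x * y = y * x

/-- A character of a context: a unital *-algebra homomorphism to `ℂ`. -/
abbrev Character {n : ℕ} (C : StarSubalgebra ℂ (Mat n)) := C →⋆ₐ[ℂ] ℂ

/-- A state on `M_n(ℂ)`: a normalized positive linear functional. -/
structure IsState {n : ℕ} (ψ : Mat n →ₗ[ℂ] ℂ) : Prop where
  map_one : ψ 1 = 1
  pos : ∀ x : Mat n, 0 ≤ ψ (star x * x)

open Matrix

namespace Aux

variable {n : ℕ}

lemma proj_star {p : Mat n} (h : IsProjection p) : pᴴ = p := h.1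

lemma proj_one : IsProjection (1 : Mat n) := ⟨star_one _, one_mul _⟩

lemma proj_compl {p : Mat n} (h : IsProjection p) : IsProjection (1 - p) := by
  constructor
  · simp [star_sub, h.1]
  · rw [sub_mul, one_mul, mul_sub, mul_one, h.2]
    abel

lemma proj_posSemidef {p : Mat n} (h : IsProjection p) : p.PosSemidef := by
  have : p = pᴴ * p := by rw [show pᴴ = p from h.1, h.2]
  rw [this]
  exact Matrix.posSemidef_conjTranspose_mul_self p

lemma psd_neg_eq_zero {X : Mat n} (h1 : X.PosSemidef) (h2 : (-X).PosSemidef) : X = 0 := by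
  have hx : ∀ v : Fin n → ℂ, X *ᵥ v = 0 := by
    intro v
    rw [← h1.dotProduct_mulVec_zero_iff]
    have a1 := h1.dotProduct_mulVec_nonneg v
    have a2 := h2.dotProduct_mulVec_nonneg v
    rw [Matrix.neg_mulVec, dotProduct_neg] at a2
    exact le_antisymm (neg_nonneg.mp a2) a1
  ext i j
  have := congrFun (hx (Pi.single j 1)) i
  simpa [Matrix.mulVec_single] using this

lemma loewner_iff_absorb {a b : Mat n} (ha : IsProjection a) (hb : IsProjection b) :
    loewnerLE a b ↔ b * a = a := by
  constructor
  · intro h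
    have key : (a * (1 - b))ᴴ * (a * (1 - b)) = (1 - b) * a * (1 - b) := by
      rw [Matrix.conjTranspose_mul, proj_star (proj_compl hb), proj_star ha]
      rw [show (1 - b) * a * (a * (1 - b)) = (1 - b) * (a * a) * (1 - b) by
        noncomm_ring]
      rw [ha.2]
    have hpsd := h.conjTranspose_mul_mul_same (1 - b)
    have hrw : (1 - b)ᴴ * (b - a) * (1 - b) = -((a * (1 - b))ᴴ * (a * (1 - b))) := by
      rw [proj_star (proj_compl hb), key]
      have h1 : (1 - b) * (b - a) = -((1 - b) * a) := by
        calc (1 - b) * (b - a) = (1 - b) * b - (1 - b) * a := by rw [mul_sub]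
        _ = -((1 - b) * a) := by rw [sub_mul, one_mul, hb.2, sub_self, zero_sub]
      rw [h1, neg_mul]
    rw [hrw] at hpsd
    have hz : (a * (1 - b))ᴴ * (a * (1 - b)) = 0 :=
      psd_neg_eq_zero (Matrix.posSemidef_conjTranspose_mul_self _) hpsd
    have hm0 : a * (1 - b) = 0 := Matrix.conjTranspose_mul_self_eq_zero.mp hz
    have hab : a * b = a := by
      rw [mul_sub, mul_one, sub_eq_zero] at hm0
      exact hm0.symm
    calc b * a = (a * b)ᴴ := by rw [Matrix.conjTranspose_mul, proj_star ha, proj_star hb]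
    _ = aᴴ := by rw [hab]
    _ = a := proj_star ha
  · intro h
    have hab : a * b = a := by
      have := congrArg Matrix.conjTranspose h
      rwa [Matrix.conjTranspose_mul, proj_star ha, proj_star hb] at this
    have : IsProjection (b - a) := by
      constructor
      · simp [star_sub, ha.1, hb.1]
      · rw [sub_mul, mul_sub, mul_sub, hb.2, ha.2, h, hab]
        abel
    exact proj_posSemidef this

lemma loewner_zero {p : Mat n} (h : IsProjection p) : loewnerLE 0 p := by
  unfold loewnerLE; rw [sub_zero]; exact proj_posSemidef h

lemma loewner_trans {a b c : Mat n} (h1 : loewnerLE a b) (h2 : loewnerLE b c) :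
    loewnerLE a c := by
  unfold loewnerLE at *
  have := h1.add h2
  rwa [show b - a + (c - b) = c - a by abel] at this


lemma proj_zero : IsProjection (0 : Mat n) := ⟨star_zero _, mul_zero _⟩

open Polynomial in
lemma aeval_conj (U x : Mat n) (h1 : U * star U = 1) (h2 : star U * U = 1) (P : ℂ[X]) :
    aeval (U * x * star U) P = U * aeval x P * star U := by
  let f : Mat n →ₐ[ℂ] Mat n :=
  { toFun := fun y => U * y * star U
    map_one' := by show U * 1 * star U = 1; rw [mul_one, h1]
    map_mul' := fun y z => by
      show U * (y * z) * star U = U * y * star U * (U * z * star U)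
      have hc : ∀ X : Mat n, star U * (U * X) = X := fun X => by
        rw [← mul_assoc, h2, one_mul]
      simp only [mul_assoc, hc]
    map_zero' := by simp
    map_add' := fun y z => by
      show U * (y + z) * star U = U * y * star U + U * z * star U
      rw [mul_add, add_mul]
    commutes' := fun c => by
      simp only [Algebra.algebraMap_eq_smul_one, mul_smul_comm, smul_mul_assoc, mul_one, h1] }
  exact Polynomial.aeval_algHom_apply f x P

open Polynomial in
lemma aeval_diagonal (d : Fin n → ℂ) (P : ℂ[X]) :
    aeval (Matrix.diagonal d) P = Matrix.diagonal (fun i => P.eval (d i)) := by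
  have h := Polynomial.aeval_algHom_apply
    (Matrix.diagonalAlgHom ℂ : (Fin n → ℂ) →ₐ[ℂ] Mat n) d P
  simp only [Matrix.diagonalAlgHom_apply] at h
  rw [h]
  have hfn : (Polynomial.aeval d) P = fun i => P.eval (d i) := by
    funext i
    have h2 := Polynomial.aeval_algHom_apply (Pi.evalAlgHom ℂ (fun _ : Fin n => ℂ) i) d P
    simp only [Pi.evalAlgHom_apply] at h2
    rw [← h2, Polynomial.coe_aeval_eq_eval]
  rw [hfn]

lemma aeval_mem {S : StarSubalgebra ℂ (Mat n)} {a : Mat n} (ha : a ∈ S) (P : Polynomial ℂ) :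
    Polynomial.aeval a P ∈ S := by
  have h := Polynomial.aeval_algHom_apply S.toSubalgebra.val (⟨a, ha⟩ : S.toSubalgebra) P
  rw [show (Polynomial.aeval a) P
      = ((Polynomial.aeval (⟨a, ha⟩ : S.toSubalgebra)) P : Mat n) from h]
  exact ((Polynomial.aeval (⟨a, ha⟩ : S.toSubalgebra)) P).2

lemma spectral_decomp (a : Mat n) (ha : a.IsHermitian) :
    ∃ (s : Finset ℝ) (e : ℝ → Mat n),
      (∀ μ ∈ s, IsProjection (e μ)) ∧
      (∀ μ ∈ s, ∃ P : Polynomial ℂ, Polynomial.aeval a P = e μ) ∧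
      a = ∑ μ ∈ s, (μ : ℂ) • e μ := by
  classical
  set U : Mat n := (ha.eigenvectorUnitary : Mat n) with hUdef
  have hU : U ∈ Matrix.unitaryGroup (Fin n) ℂ := ha.eigenvectorUnitary.2
  have h1 : U * star U = 1 := Matrix.mem_unitaryGroup_iff.mp hU
  have h2 : star U * U = 1 := Matrix.mem_unitaryGroup_iff'.mp hU
  set ev := ha.eigenvalues with hev
  set s : Finset ℝ := Finset.image ev Finset.univ with hs
  set f : ℝ → Fin n → ℂ := fun μ i => if ev i = μ then (1:ℂ) else 0 with hf
  have hst : a = U * Matrix.diagonal (fun i => ((ev i : ℝ) : ℂ)) * star U := by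
    have := ha.spectral_theorem
    exact this
  have hc : ∀ X : Mat n, star U * (U * X) = X := fun X => by
    rw [← mul_assoc, h2, one_mul]
  refine ⟨s, fun μ => U * Matrix.diagonal (f μ) * star U, ?_, ?_, ?_⟩
  · intro μ _
    have hsf : star (f μ) = f μ := by
      funext i
      by_cases h : ev i = μ <;> simp [hf, h]
    have hstar : star (Matrix.diagonal (f μ)) = Matrix.diagonal (f μ) := by
      rw [Matrix.star_eq_conjTranspose, Matrix.diagonal_conjTranspose, hsf]
    constructor
    · simp only [Matrix.star_mul, star_star, hstar, mul_assoc]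
    · have hff : Matrix.diagonal (f μ) * Matrix.diagonal (f μ) = Matrix.diagonal (f μ) := by
        rw [Matrix.diagonal_mul_diagonal]
        have hffn : (fun i => f μ i * f μ i) = f μ := by
          funext i
          by_cases h : ev i = μ <;> simp [hf, h]
        rw [hffn]
      simp only [mul_assoc, hc]
      rw [← mul_assoc (Matrix.diagonal (f μ)), hff]
  · intro μ _
    refine ⟨Lagrange.interpolate s (fun x : ℝ => (x : ℂ)) (fun x => if x = μ then 1 else 0), ?_⟩
    conv_lhs => rw [hst]
    rw [aeval_conj _ _ h1 h2, aeval_diagonal]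
    have hEq : (fun i => Polynomial.eval (((ev i : ℝ) : ℂ))
        (Lagrange.interpolate s (fun x : ℝ => (x : ℂ)) (fun x => if x = μ then 1 else 0)))
        = f μ := by
      funext i
      show Polynomial.eval ((fun x : ℝ => (x : ℂ)) (ev i))
        (Lagrange.interpolate s (fun x : ℝ => (x : ℂ)) (fun x => if x = μ then 1 else 0)) = f μ i
      rw [Lagrange.eval_interpolate_at_node _ (Complex.ofReal_injective.injOn)
        (by rw [hs]; exact Finset.mem_image_of_mem ev (Finset.mem_univ i))]
    rw [hEq]
  · have hd : (∑ μ ∈ s, (μ:ℂ) • Matrix.diagonal (f μ))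
        = Matrix.diagonal (fun i => ((ev i : ℝ) : ℂ)) := by
      ext i j
      by_cases hij : i = j
      · subst hij
        simp only [Matrix.sum_apply, Matrix.smul_apply, Matrix.diagonal_apply_eq, smul_eq_mul,
          hf, mul_ite, mul_one, mul_zero]
        rw [Finset.sum_ite_eq s (ev i) (fun μ => (μ:ℂ)),
          if_pos (show ev i ∈ s from Finset.mem_image_of_mem ev (Finset.mem_univ i))]
      · simp [Matrix.sum_apply, Matrix.diagonal_apply_ne _ hij, hf, hij]
    calc a = U * Matrix.diagonal (fun i => ((ev i : ℝ) : ℂ)) * star U := hst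
    _ = U * (∑ μ ∈ s, (μ:ℂ) • Matrix.diagonal (f μ)) * star U := by rw [hd]
    _ = ∑ μ ∈ s, (μ:ℂ) • (U * Matrix.diagonal (f μ) * star U) := by
        rw [Finset.mul_sum, Finset.sum_mul]
        exact Finset.sum_congr rfl fun μ _ => by rw [mul_smul_comm, smul_mul_assoc]


lemma mem_range_iff {x : Mat n} :
    x ∈ Set.range (algebraMap ℂ (Mat n)) ↔ ∃ c : ℂ, x = c • 1 := by
  constructor
  · rintro ⟨c, rfl⟩
    exact ⟨c, Algebra.algebraMap_eq_smul_one c⟩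
  · rintro ⟨c, rfl⟩
    exact ⟨c, Algebra.algebraMap_eq_smul_one c⟩

lemma range_subset (S : StarSubalgebra ℂ (Mat n)) :
    Set.range (algebraMap ℂ (Mat n)) ⊆ S := by
  rintro x ⟨c, rfl⟩
  exact algebraMap_mem S c

lemma scalar_eq_zero (hn : 0 < n) {c : ℂ} (h : c • (1 : Mat n) = 0) : c = 0 := by
  haveI : Nonempty (Fin n) := ⟨⟨0, hn⟩⟩
  rcases smul_eq_zero.mp h with h | h
  · exact h
  · exact absurd h one_ne_zero

lemma proj_not_scalar (hn : 0 < n) {p : Mat n} (hp : IsProjection p) (h0 : p ≠ 0)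
    (h1 : p ≠ 1) : ∀ c : ℂ, p ≠ c • 1 := by
  intro c hc
  have hmul := hp.2
  rw [hc, smul_mul_assoc, mul_smul_comm, smul_smul, mul_one] at hmul
  have hz : (c * c - c) • (1 : Mat n) = 0 := by rw [sub_smul, hmul, sub_self]
  have hc0 := scalar_eq_zero hn hz
  have : c = 0 ∨ c = 1 := by
    rcases mul_eq_zero.mp (show c * (c - 1) = 0 by rw [mul_sub, mul_one]; exact hc0) with h | h
    · exact Or.inl h
    · exact Or.inr (sub_eq_zero.mp h)
  rcases this with h | h
  · exact h0 (by rw [hc, h, zero_smul])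
  · exact h1 (by rw [hc, h, one_smul])

lemma coeff_unique (hn : 0 < n) {p : Mat n} (hps : ∀ c : ℂ, p ≠ c • 1)
    {α β α' β' : ℂ} (h : α • (1 : Mat n) + β • p = α' • 1 + β' • p) : α = α' ∧ β = β' := by
  have key : (α - α') • (1 : Mat n) = (β' - β) • p := by
    rw [sub_smul, sub_smul, sub_eq_sub_iff_add_eq_add, h, add_comm]
  by_cases hb : β = β'
  · subst hb
    rw [sub_self, zero_smul] at key
    have := scalar_eq_zero hn key
    exact ⟨by linear_combination this, rfl⟩
  · exfalso
    have hb' : β' - β ≠ 0 := sub_ne_zero.mpr (Ne.symm hb)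
    have h2 := congrArg (fun z => (β' - β)⁻¹ • z) key.symm
    simp only [smul_smul, inv_mul_cancel₀ hb', one_smul] at h2
    exact hps _ h2

lemma span_mem_adjoin {p : Mat n} (α β : ℂ) :
    α • (1 : Mat n) + β • p ∈ StarAlgebra.adjoin ℂ ({p} : Set (Mat n)) := by
  have h1 : (1 : Mat n) ∈ StarAlgebra.adjoin ℂ ({p} : Set (Mat n)) := one_mem _
  have hp : p ∈ StarAlgebra.adjoin ℂ ({p} : Set (Mat n)) :=
    StarAlgebra.self_mem_adjoin_singleton ℂ p
  exact add_mem (SMulMemClass.smul_mem α h1) (SMulMemClass.smul_mem β hp)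

lemma mem_adjoin_proj {p : Mat n} (hp : IsProjection p) {x : Mat n}
    (hx : x ∈ StarAlgebra.adjoin ℂ ({p} : Set (Mat n))) : ∃ α β : ℂ, x = α • 1 + β • p := by
  induction hx using StarAlgebra.adjoin_induction with
  | mem y hy =>
      exact ⟨0, 1, by rw [Set.mem_singleton_iff.mp hy]; simp⟩
  | algebraMap c => exact ⟨c, 0, by rw [Algebra.algebraMap_eq_smul_one]; simp⟩
  | add x y hx hy ihx ihy =>
      obtain ⟨a, b, rfl⟩ := ihx
      obtain ⟨c, d, rfl⟩ := ihy
      exact ⟨a + c, b + d, by module⟩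
  | mul x y hx hy ihx ihy =>
      obtain ⟨a, b, rfl⟩ := ihx
      obtain ⟨c, d, rfl⟩ := ihy
      refine ⟨a * c, a * d + b * c + b * d, ?_⟩
      simp only [add_mul, mul_add, smul_mul_assoc, mul_smul_comm, one_mul, mul_one,
        hp.2, smul_smul]
      module
  | star x hx ihx =>
      obtain ⟨a, b, rfl⟩ := ihx
      refine ⟨starRingEnd ℂ a, starRingEnd ℂ b, ?_⟩
      rw [star_add, star_smul, star_smul, star_one, hp.1]
      rfl

lemma adjoin_proj_comm {p : Mat n} (hp : IsProjection p) :
    ∀ x ∈ StarAlgebra.adjoin ℂ ({p} : Set (Mat n)),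
      ∀ y ∈ StarAlgebra.adjoin ℂ ({p} : Set (Mat n)), x * y = y * x := by
  intro x hx y hy
  obtain ⟨a, b, rfl⟩ := mem_adjoin_proj hp hx
  obtain ⟨c, d, rfl⟩ := mem_adjoin_proj hp hy
  simp only [add_mul, mul_add, smul_mul_assoc, mul_smul_comm, one_mul, mul_one, hp.2]
  module

lemma proj_classify (hn : 0 < n) {p : Mat n} (hp : IsProjection p) (h0 : p ≠ 0) (h1 : p ≠ 1)
    {x : Mat n} (hx : IsProjection x) {α β : ℂ} (hxe : x = α • 1 + β • p) :
    x = 0 ∨ x = 1 ∨ x = p ∨ x = 1 - p := by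
  have hps := proj_not_scalar hn hp h0 h1
  have hsq := hx.2
  rw [hxe] at hsq
  have hexp : (α • (1 : Mat n) + β • p) * (α • 1 + β • p)
      = (α * α) • 1 + (α * β + β * α + β * β) • p := by
    simp only [add_mul, mul_add, smul_mul_assoc, mul_smul_comm, one_mul, mul_one,
      hp.2, smul_smul]
    module
  rw [hexp] at hsq
  have hco := coeff_unique hn hps hsq
  have hα : α * α = α := hco.1
  have hβ : α * β + β * α + β * β = β := hco.2
  have hα01 : α = 0 ∨ α = 1 := by
    rcases mul_eq_zero.mp (show α * (α - 1) = 0 by rw [mul_sub, mul_one, hα, sub_self]) with h | h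
    · exact Or.inl h
    · exact Or.inr (sub_eq_zero.mp h)
  rcases hα01 with h | h
  · subst h
    have hββ : β * β = β := by linear_combination hβ
    have hβ01 : β = 0 ∨ β = 1 := by
      rcases mul_eq_zero.mp (show β * (β - 1) = 0 by
        rw [mul_sub, mul_one, hββ, sub_self]) with h | h
      · exact Or.inl h
      · exact Or.inr (sub_eq_zero.mp h)
    rcases hβ01 with h | h
    · left; rw [hxe, h]; simp
    · right; right; left; rw [hxe, h]; simp
  · subst h
    have hββ : β * (β + 1) = 0 := by linear_combination hβ
    rcases mul_eq_zero.mp hββ with h | h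
    · right; left; rw [hxe, h]; simp
    · right; right; right
      have : β = -1 := by linear_combination h
      rw [hxe, this]
      simp [sub_eq_add_neg]

lemma psi_proj_nonneg {ψ : Mat n →ₗ[ℂ] ℂ} (hψ : IsState ψ) {p : Mat n}
    (hp : IsProjection p) : 0 ≤ ψ p := by
  rw [show p = star p * p by rw [hp.1, hp.2]]
  exact hψ.pos p

lemma loewner_one_compl {q : Mat n} (hq : IsProjection q) (h : loewnerLE 1 (1 - q)) :
    q = 0 := by
  have := (loewner_iff_absorb proj_one (proj_compl hq)).mp h
  rw [mul_one] at this
  exact sub_eq_self.mp this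

lemma loewner_q_both {q r : Mat n} (hq : IsProjection q) (hr : IsProjection r)
    (h1 : loewnerLE q r) (h2 : loewnerLE q (1 - r)) : q = 0 := by
  have a1 := (loewner_iff_absorb hq hr).mp h1
  have a2 := (loewner_iff_absorb hq (proj_compl hr)).mp h2
  rw [sub_mul, one_mul, a1, sub_self] at a2
  exact a2.symm


lemma psd_zero : (0 : Mat n).PosSemidef := by
  constructor
  · show (0 : Mat n)ᴴ = 0
    simp
  · intro v
    simp

lemma loewner_refl (x : Mat n) : loewnerLE x x := by
  unfold loewnerLE
  rw [sub_self]
  exact psd_zero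

lemma psi_psd_nonneg {ψ : Mat n →ₗ[ℂ] ℂ} (hψ : IsState ψ) {M : Mat n}
    (hM : M.PosSemidef) : 0 ≤ ψ M := by
  obtain ⟨B, hB⟩ : ∃ B : Mat n, M = star B * B := by
    open scoped MatrixOrder Matrix.Norms.L2Operator in
    exact CStarAlgebra.nonneg_iff_eq_star_mul_self.mp hM.nonneg
  rw [hB]
  exact hψ.pos B

lemma prod_proj {p r : Mat n} (hp : IsProjection p) (hr : IsProjection r)
    (hcomm : p * r = r * p) : IsProjection (p * r) := by
  constructor
  · calc star (p * r) = star r * star p := Matrix.star_mul _ _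
    _ = r * p := by rw [hp.1, hr.1]
    _ = p * r := hcomm.symm
  · have key : p * r * (p * r) = p * (p * (r * r)) := by
      calc p * r * (p * r) = p * (r * (p * r)) := by simp only [mul_assoc]
      _ = p * ((r * p) * r) := by simp only [mul_assoc]
      _ = p * ((p * r) * r) := by rw [← hcomm]
      _ = p * (p * (r * r)) := by simp only [mul_assoc]
    rw [key, hr.2, ← mul_assoc, hp.2]

lemma herm_self (x : Mat n) : (x + xᴴ).IsHermitian := by
  show (x + xᴴ)ᴴ = x + xᴴ
  rw [Matrix.conjTranspose_add, Matrix.conjTranspose_conjTranspose, add_comm]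

lemma herm_skew (x : Mat n) : (Complex.I • (xᴴ - x)).IsHermitian := by
  show (Complex.I • (xᴴ - x))ᴴ = Complex.I • (xᴴ - x)
  rw [Matrix.conjTranspose_smul, Matrix.conjTranspose_sub,
    Matrix.conjTranspose_conjTranspose]
  rw [show star Complex.I = -Complex.I by simp, neg_smul, ← smul_neg, neg_sub]

lemma herm_combo (x : Mat n) :
    x = (2⁻¹ : ℂ) • (x + xᴴ) + ((2⁻¹ : ℂ) * Complex.I) • (Complex.I • (xᴴ - x)) := by
  rw [smul_smul, show (2⁻¹ : ℂ) * Complex.I * Complex.I = -2⁻¹ by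
    rw [mul_assoc, Complex.I_mul_I, mul_neg_one]]
  module

end Aux


/-- Characterization of when the negation (inner daseinisations of `1 - q`
over all nontrivial subcontexts `D ⊆ C`) is totally true for a state, with the trivial context
`ℂ·1` removed. -/
theorem negation_truth_characterization {n : ℕ} (hn : 0 < n)
    (ψ : Mat n →ₗ[ℂ] ℂ) (hψ : IsState ψ)
    (q : Mat n) (hq : IsProjection q) (hq0 : q ≠ 0)
    (C : Ctx n) (hC : (C.alg : Set (Mat n)) ≠ Set.range (algebraMap ℂ (Mat n))) :
    (∀ D : Ctx n, Set.range (algebraMap ℂ (Mat n)) ⊂ (D.alg : Set (Mat n)) →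
        D.alg ≤ C.alg →
        ∀ e ∈ D.alg, IsProjection e → loewnerLE e (1 - q) →
          (∀ p ∈ D.alg, IsProjection p → loewnerLE p (1 - q) → loewnerLE p e) →
          ψ e = 1) ↔
      (∃ p : Mat n, IsProjection p ∧ p ∈ C.alg ∧
        C.alg = StarAlgebra.adjoin ℂ {p} ∧ loewnerLE q p ∧ ψ p = 0) := by
  constructor
  · intro H
    have dich : ∀ r : Mat n, r ∈ C.alg → IsProjection r → r ≠ 0 → r ≠ 1 →
        (loewnerLE r (1 - q) ∧ ψ r = 1) ∨ (loewnerLE q r ∧ ψ r = 0) := by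
      intro r hrC hr hr0 hr1
      set D : Ctx n := ⟨StarAlgebra.adjoin ℂ ({r} : Set (Mat n)), Aux.adjoin_proj_comm hr⟩
        with hD
      have memr : r ∈ D.alg := StarAlgebra.self_mem_adjoin_singleton ℂ r
      have hDss : Set.range (algebraMap ℂ (Mat n)) ⊂ (D.alg : Set (Mat n)) := by
        refine Set.ssubset_iff_subset_ne.mpr ⟨Aux.range_subset _, ?_⟩
        intro hEq
        have hrmem : r ∈ Set.range (algebraMap ℂ (Mat n)) := by
          rw [hEq]
          exact memr
        obtain ⟨c, hc⟩ := Aux.mem_range_iff.mp hrmem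
        exact Aux.proj_not_scalar hn hr hr0 hr1 c hc
      have hDC : D.alg ≤ C.alg := StarAlgebra.adjoin_le (Set.singleton_subset_iff.mpr hrC)
      have hone : ¬ loewnerLE 1 (1 - q) := fun h => hq0 (Aux.loewner_one_compl hq h)
      have memr' : (1 : Mat n) - r ∈ D.alg := sub_mem (one_mem _) memr
      have classify : ∀ p' ∈ D.alg, IsProjection p' →
          p' = 0 ∨ p' = 1 ∨ p' = r ∨ p' = 1 - r := by
        intro p' hp' hpp
        obtain ⟨α, β, he⟩ := Aux.mem_adjoin_proj hr hp'
        exact Aux.proj_classify hn hr hr0 hr1 hpp he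
      have h1r_iff : loewnerLE (1 - r) (1 - q) ↔ loewnerLE q r := by
        unfold loewnerLE
        rw [show (1 : Mat n) - q - (1 - r) = r - q by abel]
      by_cases hcase1 : loewnerLE r (1 - q)
      · left
        refine ⟨hcase1, H D hDss hDC r memr hr hcase1 ?_⟩
        intro p' hp' hpp hple
        rcases classify p' hp' hpp with h | h | h | h
        · rw [h]; exact Aux.loewner_zero hr
        · rw [h] at hple; exact absurd hple hone
        · rw [h]; exact Aux.loewner_refl r
        · exfalso
          rw [h] at hple
          have hqr : loewnerLE q r := h1r_iff.mp hple
          have hq1q : loewnerLE q (1 - q) := Aux.loewner_trans hqr hcase1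
          exact hq0 (Aux.loewner_q_both hq hq (Aux.loewner_refl q) hq1q)
      · by_cases hcase2 : loewnerLE q r
        · right
          refine ⟨hcase2, ?_⟩
          have hmax : ∀ p' ∈ D.alg, IsProjection p' → loewnerLE p' (1 - q) →
              loewnerLE p' (1 - r) := by
            intro p' hp' hpp hple
            rcases classify p' hp' hpp with h | h | h | h
            · rw [h]; exact Aux.loewner_zero (Aux.proj_compl hr)
            · rw [h] at hple; exact absurd hple hone
            · rw [h] at hple; exact absurd hple hcase1
            · rw [h]; exact Aux.loewner_refl _
          have hres := H D hDss hDC (1 - r) memr' (Aux.proj_compl hr)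
            (h1r_iff.mpr hcase2) hmax
          rw [map_sub, hψ.map_one] at hres
          linear_combination -hres
        · exfalso
          have hmax : ∀ p' ∈ D.alg, IsProjection p' → loewnerLE p' (1 - q) →
              loewnerLE p' 0 := by
            intro p' hp' hpp hple
            rcases classify p' hp' hpp with h | h | h | h
            · rw [h]; exact Aux.loewner_refl 0
            · rw [h] at hple; exact absurd hple hone
            · rw [h] at hple; exact absurd hple hcase1
            · rw [h] at hple; exact absurd (h1r_iff.mp hple) hcase2
          have hres := H D hDss hDC 0 (zero_mem _) Aux.proj_zero
            (Aux.loewner_zero (Aux.proj_compl hq)) hmax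
          rw [map_zero] at hres
          exact zero_ne_one hres
    have hex : ∃ x ∈ (C.alg : Set (Mat n)), x ∉ Set.range (algebraMap ℂ (Mat n)) := by
      by_contra h
      push_neg at h
      exact hC (Set.Subset.antisymm h (Aux.range_subset C.alg))
    obtain ⟨x, hxC, hxns⟩ := hex
    have hxC' : x ∈ C.alg := hxC
    have haex : ∃ a, a ∈ C.alg ∧ a.IsHermitian ∧ a ∉ Set.range (algebraMap ℂ (Mat n)) := by
      have hAC : x + xᴴ ∈ C.alg := add_mem hxC' (star_mem hxC')
      have hBC : Complex.I • (xᴴ - x) ∈ C.alg :=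
        SMulMemClass.smul_mem _ (sub_mem (star_mem hxC') hxC')
      by_cases hA' : (x + xᴴ) ∈ Set.range (algebraMap ℂ (Mat n))
      · by_cases hB' : (Complex.I • (xᴴ - x)) ∈ Set.range (algebraMap ℂ (Mat n))
        · exfalso
          obtain ⟨c, hc⟩ := Aux.mem_range_iff.mp hA'
          obtain ⟨d, hd⟩ := Aux.mem_range_iff.mp hB'
          apply hxns
          rw [Aux.mem_range_iff]
          refine ⟨2⁻¹ * c + 2⁻¹ * Complex.I * d, ?_⟩
          calc x = (2⁻¹ : ℂ) • (x + xᴴ)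
              + ((2⁻¹ : ℂ) * Complex.I) • (Complex.I • (xᴴ - x)) := Aux.herm_combo x
          _ = (2⁻¹ : ℂ) • (c • 1) + ((2⁻¹ : ℂ) * Complex.I) • (d • 1) := by rw [hc, hd]
          _ = (2⁻¹ * c + 2⁻¹ * Complex.I * d) • 1 := by
              rw [smul_smul, smul_smul, ← add_smul]
        · exact ⟨_, hBC, Aux.herm_skew x, hB'⟩
      · exact ⟨_, hAC, Aux.herm_self x, hA'⟩
    obtain ⟨a, haC, haH, hans⟩ := haex
    obtain ⟨s, e, hproj, hpoly, hsum⟩ := Aux.spectral_decomp a haH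
    have heC : ∀ μ ∈ s, e μ ∈ C.alg := by
      intro μ hμ
      obtain ⟨P, hP⟩ := hpoly μ hμ
      rw [← hP]
      exact Aux.aeval_mem haC P
    have hnt : ∃ μ ∈ s, e μ ≠ 0 ∧ e μ ≠ 1 := by
      by_contra h
      push_neg at h
      apply hans
      have hbot : a ∈ (⊥ : Subalgebra ℂ (Mat n)) := by
        rw [hsum]
        apply sum_mem
        intro μ hμ
        by_cases h0 : e μ = 0
        · rw [h0, smul_zero]
          exact zero_mem _
        · rw [h μ hμ h0]
          exact Algebra.mem_bot.mpr ⟨(μ : ℂ), by rw [Algebra.algebraMap_eq_smul_one]⟩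
      exact Algebra.mem_bot.mp hbot
    obtain ⟨μ₀, hμ₀, h00, h01⟩ := hnt
    have hr₀C := heC μ₀ hμ₀
    have hr₀P := hproj μ₀ hμ₀
    have hstep : ∃ p, IsProjection p ∧ p ∈ C.alg ∧ loewnerLE q p ∧ ψ p = 0 := by
      rcases dich (e μ₀) hr₀C hr₀P h00 h01 with ⟨hle, hψ1⟩ | ⟨hge, hψ0⟩
      · have h10 : (1 : Mat n) - e μ₀ ≠ 0 := fun h => h01 (sub_eq_zero.mp h).symm
        have h11 : (1 : Mat n) - e μ₀ ≠ 1 := fun h => h00 (sub_eq_self.mp h)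
        rcases dich (1 - e μ₀) (sub_mem (one_mem _) hr₀C) (Aux.proj_compl hr₀P) h10 h11 with
          ⟨_, hψ1'⟩ | ⟨hge', hψ0'⟩
        · exfalso
          rw [map_sub, hψ.map_one, hψ1] at hψ1'
          norm_num at hψ1'
        · exact ⟨_, Aux.proj_compl hr₀P, sub_mem (one_mem _) hr₀C, hge', hψ0'⟩
      · exact ⟨_, hr₀P, hr₀C, hge, hψ0⟩
    obtain ⟨p, hpP, hpC, hqp, hψp⟩ := hstep
    have hqabs_p : p * q = q := (Aux.loewner_iff_absorb hq hpP).mp hqp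
    have hp0 : p ≠ 0 := by
      intro h
      rw [h, zero_mul] at hqabs_p
      exact hq0 hqabs_p.symm
    have hp1 : p ≠ 1 := by
      intro h
      rw [h, hψ.map_one] at hψp
      exact one_ne_zero hψp
    have key : ∀ r, r ∈ C.alg → IsProjection r → r ≠ 0 → r ≠ 1 → loewnerLE q r →
        ψ r = 0 → r = p := by
      intro r hrC hr hr0 hr1 hqr hψr
      have hcomm : p * r = r * p := C.comm p hpC r hrC
      have hqabs_r : r * q = q := (Aux.loewner_iff_absorb hq hr).mp hqr
      have hprP : IsProjection (p * r) := Aux.prod_proj hpP hr hcomm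
      have hpr_le_r : loewnerLE (p * r) r := by
        apply (Aux.loewner_iff_absorb hprP hr).mpr
        rw [← mul_assoc, ← hcomm, mul_assoc, hr.2]
      have hψpr_le : ψ (p * r) ≤ 0 := by
        have h0' : (0 : ℂ) ≤ ψ (r - p * r) := Aux.psi_psd_nonneg hψ hpr_le_r
        rw [map_sub, hψr] at h0'
        exact sub_nonneg.mp h0'
      have hψpr0 : ψ (p * r) = 0 := le_antisymm hψpr_le (Aux.psi_proj_nonneg hψ hprP)
      have hcomm' : p * (1 - r) = (1 - r) * p := by
        rw [mul_sub, sub_mul, mul_one, one_mul, hcomm]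
      have hψs₂ : ψ (p * (1 - r)) = 0 := by
        rw [mul_sub, mul_one, map_sub, hψp, hψpr0, sub_zero]
      by_cases hs₂0 : p * (1 - r) = 0
      · have hpr_eq : p * r = p := by
          rw [mul_sub, mul_one, sub_eq_zero] at hs₂0
          exact hs₂0.symm
        have hrp_eq : r * p = p := by rw [← hcomm]; exact hpr_eq
        have hs₃eq : r - p = r * (1 - p) := by
          rw [mul_sub, mul_one, hrp_eq]
        have hs₃P : IsProjection (r - p) := by
          rw [hs₃eq]
          apply Aux.prod_proj hr (Aux.proj_compl hpP)
          rw [mul_sub, sub_mul, mul_one, one_mul, hrp_eq, hpr_eq]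
        have hψs₃ : ψ (r - p) = 0 := by rw [map_sub, hψr, hψp, sub_zero]
        by_cases hs₃0 : r - p = 0
        · exact sub_eq_zero.mp hs₃0
        · exfalso
          have hs₃1 : r - p ≠ 1 := by
            intro h
            have hle1 : loewnerLE 1 r := by
              unfold loewnerLE
              rw [show r - 1 = p by rw [← h]; abel]
              exact Aux.proj_posSemidef hpP
            have habs := (Aux.loewner_iff_absorb Aux.proj_one hr).mp hle1
            rw [mul_one] at habs
            exact hr1 habs
          rcases dich (r - p) (sub_mem hrC hpC) hs₃P hs₃0 hs₃1 with ⟨_, h1'⟩ | ⟨hge', _⟩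
          · rw [hψs₃] at h1'
            exact zero_ne_one h1'
          · have habs := (Aux.loewner_iff_absorb hq hs₃P).mp hge'
            rw [sub_mul, hqabs_r, hqabs_p, sub_self] at habs
            exact hq0 habs.symm
      · exfalso
        have hs₂P : IsProjection (p * (1 - r)) :=
          Aux.prod_proj hpP (Aux.proj_compl hr) hcomm'
        have hs₂1 : p * (1 - r) ≠ 1 := by
          intro h
          have h' : p - p * r = 1 := by
            rw [← h, mul_sub, mul_one]
          have h'' : p - 1 = p * r := by
            rw [← h']
            abel
          have hle1 : loewnerLE 1 p := by
            unfold loewnerLE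
            rw [h'']
            exact Aux.proj_posSemidef hprP
          have habs := (Aux.loewner_iff_absorb Aux.proj_one hpP).mp hle1
          rw [mul_one] at habs
          exact hp1 habs
        rcases dich (p * (1 - r)) (mul_mem hpC (sub_mem (one_mem _) hrC)) hs₂P hs₂0 hs₂1 with
          ⟨_, h1'⟩ | ⟨hge', _⟩
        · rw [hψs₂] at h1'
          exact zero_ne_one h1'
        · have habs := (Aux.loewner_iff_absorb hq hs₂P).mp hge'
          have hcalc : p * (1 - r) * q = 0 := by
            rw [mul_sub, mul_one, sub_mul, mul_assoc, hqabs_r, hqabs_p, sub_self]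
          rw [hcalc] at habs
          exact hq0 habs.symm
    have hclass : ∀ r ∈ C.alg, IsProjection r → r = 0 ∨ r = 1 ∨ r = p ∨ r = 1 - p := by
      intro r hrC hr
      by_cases hr0 : r = 0
      · exact Or.inl hr0
      by_cases hr1 : r = 1
      · exact Or.inr (Or.inl hr1)
      rcases dich r hrC hr hr0 hr1 with ⟨hle, hψ1⟩ | ⟨hge, hψ0⟩
      · have h10 : (1 : Mat n) - r ≠ 0 := fun h => hr1 (sub_eq_zero.mp h).symm
        have h11 : (1 : Mat n) - r ≠ 1 := fun h => hr0 (sub_eq_self.mp h)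
        rcases dich (1 - r) (sub_mem (one_mem _) hrC) (Aux.proj_compl hr) h10 h11 with
          ⟨_, hψ1'⟩ | ⟨hge', hψ0'⟩
        · exfalso
          rw [map_sub, hψ.map_one, hψ1] at hψ1'
          norm_num at hψ1'
        · have hkey := key (1 - r) (sub_mem (one_mem _) hrC) (Aux.proj_compl hr) h10 h11
            hge' hψ0'
          right; right; right
          rw [← hkey]
          abel
      · exact Or.inr (Or.inr (Or.inl (key r hrC hr hr0 hr1 hge hψ0)))
    refine ⟨p, hpP, hpC, ?_, hqp, hψp⟩
    apply le_antisymm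
    · intro x' hx'
      have hherm : ∀ a', a' ∈ C.alg → a'.IsHermitian →
          a' ∈ StarAlgebra.adjoin ℂ ({p} : Set (Mat n)) := by
        intro a' ha'C ha'H
        obtain ⟨s', e', hproj', hpoly', hsum'⟩ := Aux.spectral_decomp a' ha'H
        rw [hsum']
        apply sum_mem
        intro μ hμ
        apply SMulMemClass.smul_mem
        have he'C : e' μ ∈ C.alg := by
          obtain ⟨P, hP⟩ := hpoly' μ hμ
          rw [← hP]
          exact Aux.aeval_mem ha'C P
        rcases hclass (e' μ) he'C (hproj' μ hμ) with h | h | h | h <;> rw [h]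
        · exact zero_mem _
        · exact one_mem _
        · exact StarAlgebra.self_mem_adjoin_singleton ℂ p
        · exact sub_mem (one_mem _) (StarAlgebra.self_mem_adjoin_singleton ℂ p)
      have h1 : x' + x'ᴴ ∈ StarAlgebra.adjoin ℂ ({p} : Set (Mat n)) :=
        hherm _ (add_mem hx' (star_mem hx')) (Aux.herm_self x')
      have h2 : Complex.I • (x'ᴴ - x') ∈ StarAlgebra.adjoin ℂ ({p} : Set (Mat n)) :=
        hherm _ (SMulMemClass.smul_mem _ (sub_mem (star_mem hx') hx')) (Aux.herm_skew x')
      rw [Aux.herm_combo x']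
      exact add_mem (SMulMemClass.smul_mem _ h1) (SMulMemClass.smul_mem _ h2)
    · exact StarAlgebra.adjoin_le (Set.singleton_subset_iff.mpr hpC)
  · rintro ⟨p, hpP, hpC, hCeq, hqp, hψp⟩
    intro D hDss hDC e heD heP hele hemax
    have hqabs_p : p * q = q := (Aux.loewner_iff_absorb hq hpP).mp hqp
    have hp0 : p ≠ 0 := by
      intro h
      rw [h, zero_mul] at hqabs_p
      exact hq0 hqabs_p.symm
    have hp1 : p ≠ 1 := by
      intro h
      rw [h, hψ.map_one] at hψp
      exact one_ne_zero hψp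
    obtain ⟨x, hxD, hxns⟩ := Set.exists_of_ssubset hDss
    have hxC : x ∈ StarAlgebra.adjoin ℂ ({p} : Set (Mat n)) := by
      rw [← hCeq]
      exact hDC hxD
    obtain ⟨α, β, hxe⟩ := Aux.mem_adjoin_proj hpP hxC
    have hβ : β ≠ 0 := by
      intro h
      apply hxns
      rw [Aux.mem_range_iff]
      exact ⟨α, by rw [hxe, h, zero_smul, add_zero]⟩
    have hpD : p ∈ D.alg := by
      have hrep : p = β⁻¹ • (x - α • (1 : Mat n)) := by
        rw [hxe, add_sub_cancel_left, smul_smul, inv_mul_cancel₀ hβ, one_smul]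
      rw [hrep]
      exact SMulMemClass.smul_mem _ (sub_mem hxD (SMulMemClass.smul_mem _ (one_mem _)))
    have h1ple : loewnerLE (1 - p) (1 - q) := by
      unfold loewnerLE
      rw [show (1 : Mat n) - q - (1 - p) = p - q by abel]
      exact hqp
    have hle_e : loewnerLE (1 - p) e :=
      hemax _ (sub_mem (one_mem _) hpD) (Aux.proj_compl hpP) h1ple
    have heC : e ∈ StarAlgebra.adjoin ℂ ({p} : Set (Mat n)) := by
      rw [← hCeq]
      exact hDC heD
    obtain ⟨γ, δ, heq⟩ := Aux.mem_adjoin_proj hpP heC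
    rcases Aux.proj_classify hn hpP hp0 hp1 heP heq with h | h | h | h
    · exfalso
      rw [h] at hle_e
      have habs := (Aux.loewner_iff_absorb (Aux.proj_compl hpP) Aux.proj_zero).mp hle_e
      rw [zero_mul] at habs
      exact hp1 (sub_eq_zero.mp habs.symm).symm
    · rw [h] at hele
      exact absurd (Aux.loewner_one_compl hq hele) hq0
    · exfalso
      rw [h] at hle_e
      have habs := (Aux.loewner_iff_absorb (Aux.proj_compl hpP) hpP).mp hle_e
      rw [mul_sub, mul_one, hpP.2, sub_self] at habs
      exact hp1 (sub_eq_zero.mp habs.symm).symm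
    · rw [h, map_sub, hψ.map_one, hψp, sub_zero]


end
end

section
/- Let A = M_n(ℂ), let ψ be a state on A, let q ∈ A be a projection, and let C be a maximal commutative unital *-subalgebra of A. Let d be the least element of {p ∈ Proj(C) : 1 − q ≤ p} in the Löwner order (the outer daseinisation δᵒ(1−q)_C). Then the following are equivalent: (1) ψ(d) = 1; (2) every p ∈ Proj(C) with p ≤ q satisfies ψ(p) = 0; (3) every p ∈ Proj(C) with 1 − q ≤ p satisfies ψ(p) = 1. -/
open scoped ComplexOrder

noncomputable section

lemma state_nonneg {n : ℕ} (ψ : Mat n →ₗ[ℂ] ℂ) (hψ : IsState ψ) {x : Mat n}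
    (hx : x.PosSemidef) : 0 ≤ ψ x := by
  obtain ⟨B, hB⟩ : ∃ B : Mat n, x = B.conjTranspose * B := by
    open scoped MatrixOrder Matrix.Norms.L2Operator in
    exact CStarAlgebra.nonneg_iff_eq_star_mul_self.mp hx.nonneg
  rw [hB, ← Matrix.star_eq_conjTranspose]
  exact hψ.pos B

lemma proj_psd {n : ℕ} {p : Mat n} (hp : IsProjection p) : p.PosSemidef := by
  obtain ⟨h1, h2⟩ := hp
  have : p = p.conjTranspose * p := by
    rw [← Matrix.star_eq_conjTranspose, h1, h2]
  rw [this]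
  exact Matrix.posSemidef_conjTranspose_mul_self p

lemma proj_compl {n : ℕ} {p : Mat n} (hp : IsProjection p) : IsProjection (1 - p) := by
  obtain ⟨h1, h2⟩ := hp
  constructor
  · simp [star_sub, h1]
  · have : (1 - p) * (1 - p) = 1 - p - p + p * p := by noncomm_ring
    rw [this, h2]; abel

/-- For a maximal context `C`, the outer daseinisation of `1 - q` has state
value `1` iff every projection of `C` below `q` has value `0`, iff every projection of `C`
above `1 - q` has value `1`. -/
theorem maximal_context_negation_tfae {n : ℕ} (hn : 0 < n)
    (ψ : Mat n →ₗ[ℂ] ℂ) (hψ : IsState ψ)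
    (q : Mat n) (hq : IsProjection q)
    (C : Ctx n) (hmax : ∀ D : Ctx n, C.alg ≤ D.alg → C.alg = D.alg)
    (d : Mat n) (hdmem : d ∈ C.alg) (hdproj : IsProjection d)
    (hdge : loewnerLE (1 - q) d)
    (hdleast : ∀ p ∈ C.alg, IsProjection p → loewnerLE (1 - q) p → loewnerLE d p) :
    (ψ d = 1 ↔ ∀ p ∈ C.alg, IsProjection p → loewnerLE p q → ψ p = 0) ∧
    (ψ d = 1 ↔ ∀ p ∈ C.alg, IsProjection p → loewnerLE (1 - q) p → ψ p = 1) := by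

  have key1 : ψ d = 1 → ∀ p ∈ C.alg, IsProjection p → loewnerLE (1 - q) p → ψ p = 1 := by
    intro hd p hpC hpP hpge
    have hdp : (p - d).PosSemidef := hdleast p hpC hpP hpge
    have h1p : ((1 : Mat n) - p).PosSemidef := proj_psd (proj_compl hpP)
    have ha := state_nonneg ψ hψ hdp
    have hb := state_nonneg ψ hψ h1p
    have hsum : ψ (p - d) + ψ (1 - p) = 0 := by
      rw [map_sub, map_sub, hψ.map_one, hd]; ring
    have hz : ψ (p - d) = 0 := by
      have h1 : ψ (p - d) ≤ 0 := by
        have : ψ (p - d) = -ψ (1 - p) := by linear_combination hsum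
        rw [this]; exact neg_nonpos.mpr hb
      exact le_antisymm h1 ha
    rw [map_sub, sub_eq_zero] at hz
    rw [hz, hd]
  have key2 : (∀ p ∈ C.alg, IsProjection p → loewnerLE (1 - q) p → ψ p = 1) → ψ d = 1 :=
    fun h => h d hdmem hdproj hdge
  have b23 : (∀ p ∈ C.alg, IsProjection p → loewnerLE p q → ψ p = 0) →
      (∀ p ∈ C.alg, IsProjection p → loewnerLE (1 - q) p → ψ p = 1) := by
    intro h p hpC hpP hpge
    have hmem : (1 : Mat n) - p ∈ C.alg := sub_mem (one_mem _) hpC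
    have hle : loewnerLE (1 - p) q := by
      unfold loewnerLE at *
      have : q - (1 - p) = p - (1 - q) := by abel
      rw [this]; exact hpge
    have := h (1 - p) hmem (proj_compl hpP) hle
    rw [map_sub, hψ.map_one, sub_eq_zero] at this
    exact this.symm
  have b32 : (∀ p ∈ C.alg, IsProjection p → loewnerLE (1 - q) p → ψ p = 1) →
      (∀ p ∈ C.alg, IsProjection p → loewnerLE p q → ψ p = 0) := by
    intro h p hpC hpP hple
    have hmem : (1 : Mat n) - p ∈ C.alg := sub_mem (one_mem _) hpC
    have hge : loewnerLE (1 - q) (1 - p) := by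
      unfold loewnerLE at *
      have : 1 - p - (1 - q) = q - p := by abel
      rw [this]; exact hple
    have := h (1 - p) hmem (proj_compl hpP) hge
    rw [map_sub, hψ.map_one] at this
    linear_combination -this
  exact ⟨⟨fun hd => b32 (key1 hd), fun h => key2 (b23 h)⟩, ⟨key1, key2⟩⟩


end
end

section
/- Let h : M_n(ℂ) → M_n(ℂ) be a *-algebra automorphism, let ψ be a state on M_n(ℂ), let a ∈ M_n(ℂ) be Hermitian, let S ⊆ ℝ, and let C be a context with image context h[C] = {h(c) : c ∈ C}. Let d be the least element of {p ∈ Proj(C) : χ_S(a) ≤ p} in the Löwner order, and let d' be the least element of {p ∈ Proj(h[C]) : χ_S(h(a)) ≤ p} in the Löwner order. Then ψ(h(d)) = 1 if and only if ψ(d') = 1. -/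
open scoped ComplexOrder

noncomputable section

section Aux

lemma posSemidef_antisymm {n : ℕ} {m : Mat n} (h1 : m.PosSemidef)
    (h2 : (-m).PosSemidef) : m = 0 := by
  have hz : ∀ x : Fin n → ℂ, m.mulVec x = 0 := by
    intro x
    rw [← h1.dotProduct_mulVec_zero_iff]
    have a1 := h1.dotProduct_mulVec_nonneg x
    have a2 := h2.dotProduct_mulVec_nonneg x
    rw [Matrix.neg_mulVec, dotProduct_neg] at a2
    exact le_antisymm (neg_nonneg.mp a2) a1
  ext i j
  have := congrFun (hz (Pi.single j 1)) i
  simpa [Matrix.mulVec_single] using this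

lemma starAlgEquiv_posSemidef {n : ℕ} (h : Mat n ≃⋆ₐ[ℂ] Mat n) {m : Mat n}
    (hm : m.PosSemidef) : (h m).PosSemidef := by
  obtain ⟨B, rfl⟩ : ∃ B : Mat n, m = B.conjTranspose * B := by
    open MatrixOrder in
    exact ⟨CFC.sqrt m, by rw [← Matrix.star_eq_conjTranspose,
      (CFC.sqrt_nonneg m).isSelfAdjoint.star_eq, CFC.sqrt_mul_sqrt_self m hm.nonneg]⟩
  rw [← Matrix.star_eq_conjTranspose, map_mul, map_star, Matrix.star_eq_conjTranspose]
  exact Matrix.posSemidef_conjTranspose_mul_self _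

lemma starAlgEquiv_hermitian {n : ℕ} (h : Mat n ≃⋆ₐ[ℂ] Mat n) {a : Mat n}
    (ha : a.IsHermitian) : (h a).IsHermitian := by
  have h2 : star (h a) = h a := by rw [← map_star, show star a = a from ha]
  exact h2

lemma map_specProj {n : ℕ} (h : Mat n ≃⋆ₐ[ℂ] Mat n) {a : Mat n}
    (ha : a.IsHermitian) (S : Set ℝ) : specProj (h a) S = h (specProj a S) := by
  have hha : (h a).IsHermitian := starAlgEquiv_hermitian h ha
  rw [specProj, specProj, dif_pos ha, dif_pos hha, ← Matrix.IsHermitian.cfc_eq,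
    ← Matrix.IsHermitian.cfc_eq]
  have hsa : IsSelfAdjoint a := ha
  have hsha : IsSelfAdjoint (h a) := hha
  have hcs : CompactSpace (spectrum ℝ a) := by
    have hfin : (spectrum ℝ a).Finite := a.finite_real_spectrum
    exact isCompact_iff_compactSpace.mp hfin.isCompact
  have hcont : Continuous (h : Mat n → Mat n) :=
    LinearMap.continuous_of_finiteDimensional
      { toFun := h, map_add' := map_add h, map_smul' := map_smul h }
  exact (StarAlgHomClass.map_cfc h
    (Set.indicator S fun _ => (1 : ℝ)) a
    (by rw [continuousOn_iff_continuous_restrict]; fun_prop) hcont hsa hsha).symm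

end Aux

/-- For a *-algebra automorphism `h`, a state `ψ` assigns value `1` to the
image `h(δᵒ(χ_S(a))_C)` iff it assigns value `1` to `δᵒ(χ_S(h(a)))_{h[C]}`. -/
theorem automorphism_truth_value_transform {n : ℕ} (hn : 0 < n)
    (h : Mat n ≃⋆ₐ[ℂ] Mat n) (ψ : Mat n →ₗ[ℂ] ℂ) (hψ : IsState ψ)
    (a : Mat n) (ha : a.IsHermitian) (S : Set ℝ) (C : Ctx n)
    (d : Mat n) (hdmem : d ∈ C.alg) (hdproj : IsProjection d)
    (hdge : loewnerLE (specProj a S) d)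
    (hdleast : ∀ p ∈ C.alg, IsProjection p → loewnerLE (specProj a S) p → loewnerLE d p)
    (d' : Mat n) (hd'mem : d' ∈ ⇑h '' (C.alg : Set (Mat n))) (hd'proj : IsProjection d')
    (hd'ge : loewnerLE (specProj (h a) S) d')
    (hd'least : ∀ p ∈ ⇑h '' (C.alg : Set (Mat n)), IsProjection p →
      loewnerLE (specProj (h a) S) p → loewnerLE d' p) :
    ψ (h d) = 1 ↔ ψ d' = 1 := by
  have key : h d = d' := by
    have him : h d ∈ ⇑h '' (C.alg : Set (Mat n)) := ⟨d, hdmem, rfl⟩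
    have hproj : IsProjection (h d) :=
      ⟨by rw [← map_star, hdproj.1], by rw [← map_mul, hdproj.2]⟩
    have hge : loewnerLE (specProj (h a) S) (h d) := by
      rw [map_specProj h ha]
      unfold loewnerLE
      rw [← map_sub]
      exact starAlgEquiv_posSemidef h hdge
    have h1 : loewnerLE d' (h d) := hd'least _ him hproj hge
    obtain ⟨c, hc, hcd'⟩ := hd'mem
    have hcproj : IsProjection c := by
      constructor
      · have h4 := hd'proj.1
        rw [← hcd', ← map_star] at h4
        exact EquivLike.injective h h4
      · have h4 := hd'proj.2
        rw [← hcd', ← map_mul] at h4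
        exact EquivLike.injective h h4
    have hcge : loewnerLE (specProj a S) c := by
      have h2 := starAlgEquiv_posSemidef h.symm hd'ge
      unfold loewnerLE at h2 ⊢
      rw [map_sub, map_specProj h ha, StarAlgEquiv.symm_apply_apply, ← hcd',
        StarAlgEquiv.symm_apply_apply] at h2
      exact h2
    have h2 : loewnerLE d c := hdleast c hc hcproj hcge
    have h2' : loewnerLE (h d) d' := by
      unfold loewnerLE at h2 ⊢
      have h3 := starAlgEquiv_posSemidef h h2
      rwa [map_sub, hcd'] at h3
    have h0 : h d - d' = 0 := posSemidef_antisymm h1 (by rwa [neg_sub])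
    exact sub_eq_zero.mp h0
  rw [key]


end
end
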